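/- Let (P, X) be a half-decorated non-crossing partition of [m'] ∪ [m]. Then ⋂_{n∈ℤ} Σⁿ U_{(P,X)} = D (that is, an arc a satisfies Σⁿ a ∈ U_{(P,X)} for all n ∈ ℤ exactly when both endpoints of a lie in one primed copy) if and only if x_p ≠ p⁺ for every p ∈ [m] and no block of P contains two distinct labels of [m']. -/

import Mathlib

namespace PY

/-! ### The ∞-gon `Z_{2m}`

Labels are elements of `Fin (2 * m)`, ordered `1' < 1 < 2' < 2 < ⋯ < m' < m`:
the label `2 * i` is the primed (accumulation-point) label `(i+1)'` and the label
`2 * i + 1` is the unprimed label `i + 1`.  A point of `Z_{2m}` is a pair of a label and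
an integer. -/

/-- Points of the ∞-gon `Z_{2m}`: a label and an integer. -/
abbrev Pt (m : ℕ) := Fin (2 * m) × ℤ

/-- Cyclic successor of a label. -/
def cycSucc {n : ℕ} (r : Fin n) : Fin n := ⟨(r.1 + 1) % n, Nat.mod_lt _ r.pos⟩

/-- Cyclic predecessor of a label. -/
def cycPred {n : ℕ} (r : Fin n) : Fin n := ⟨(r.1 + (n - 1)) % n, Nat.mod_lt _ r.pos⟩

/-- Strict lexicographic order on the points of `Z_{2m}`. -/
def ptLt {m : ℕ} (a b : Pt m) : Prop := a.1 < b.1 ∨ (a.1 = b.1 ∧ a.2 < b.2)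

/-- `sort2 a b` is the pair `(a, b)` arranged in (weakly) increasing lexicographic
order; it realizes the notation `|a, b|` for the arc connecting two points. -/
def sort2 {m : ℕ} (a b : Pt m) : Pt m × Pt m :=
  if a.1 < b.1 ∨ (a.1 = b.1 ∧ a.2 ≤ b.2) then (a, b) else (b, a)

/-- An ordered pair of points of `Z_{2m}` is an arc when its endpoints are in increasing
lexicographic order and, if they lie in the same copy of `ℤ`, differ by at least `2`. -/
def IsArc {m : ℕ} (x : Pt m × Pt m) : Prop :=
  ptLt x.1 x.2 ∧ (x.1.1 = x.2.1 → x.1.2 + 2 ≤ x.2.2)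

/-- The precovering conditions (PC conditions) for a set of arcs of `Z_{2m}`. -/
structure PCcond {m : ℕ} (U : Set (Pt m × Pt m)) : Prop where
  pc1 : ∀ p q : Fin (2 * m), p ≠ q → ∀ x1 x2 : ℕ → ℤ, StrictMono x1 → StrictMono x2 →
    (∀ n, ((p, x1 n), (q, x2 n)) ∈ U) →
    ∃ y1 y2 : ℕ → ℤ, StrictAnti y1 ∧ StrictAnti y2 ∧
      ∀ n, sort2 (cycSucc p, y1 n) (cycSucc q, y2 n) ∈ U
  pc2 : ∀ p q : Fin (2 * m), p ≠ cycSucc q → ∀ x1 x2 : ℕ → ℤ,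
    StrictAnti x1 → StrictMono x2 →
    (∀ n, ((p, x1 n), (q, x2 n)) ∈ U) →
    ∃ y1 y2 : ℕ → ℤ, StrictAnti y1 ∧ StrictAnti y2 ∧
      ∀ n, sort2 (p, y1 n) (cycSucc q, y2 n) ∈ U
  pc2' : ∀ p q : Fin (2 * m), q ≠ cycSucc p → p ≠ q → ∀ x1 x2 : ℕ → ℤ,
    StrictMono x1 → StrictAnti x2 →
    (∀ n, ((p, x1 n), (q, x2 n)) ∈ U) →
    ∃ y1 y2 : ℕ → ℤ, StrictAnti y1 ∧ StrictAnti y2 ∧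
      ∀ n, sort2 (cycSucc p, y1 n) (q, y2 n) ∈ U
  pc3 : ∀ p q : Fin (2 * m), ∀ (x1 : ℤ) (x2 : ℕ → ℤ), StrictMono x2 →
    (∀ n, ((p, x1), (q, x2 n)) ∈ U) →
    ∃ y2 : ℕ → ℤ, StrictAnti y2 ∧ ∀ n, sort2 (p, x1) (cycSucc q, y2 n) ∈ U
  pc3' : ∀ p q : Fin (2 * m), p ≠ q → ∀ (x1 : ℕ → ℤ) (x2 : ℤ), StrictMono x1 →
    (∀ n, ((p, x1 n), (q, x2)) ∈ U) →
    ∃ y1 : ℕ → ℤ, StrictAnti y1 ∧ ∀ n, sort2 (cycSucc p, y1 n) (q, x2) ∈ U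

/-- A point is admissible for the subcategory `A`: its label is unprimed, or it is a
point `(q, n)` of a primed copy with `n ≤ z0`. -/
def memA {m : ℕ} (z0 : ℤ) (a : Pt m) : Prop :=
  a.1.1 % 2 = 1 ∨ (a.1.1 % 2 = 0 ∧ a.2 ≤ z0)

/-- The set of arcs `A` determined by the choice of `z0`. -/
def setA (m : ℕ) (z0 : ℤ) : Set (Pt m × Pt m) :=
  {x | memA z0 x.1 ∧ memA z0 x.2}

/-! ### Decorations

The linearly ordered set `{p} ∪ Z^(p) ∪ {p⁺}` is modelled as `WithBot (WithTop ℤ)`: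
`⊥` is the accumulation point `p`, an integer `n` is the point `n` of `Z^(p)`, and the
top element is the accumulation point `p⁺`. -/

/-- The linearly ordered set `{p} ∪ Z^(p) ∪ {p⁺}`. -/
abbrev Dm := WithBot (WithTop ℤ)

/-- An integer, viewed in `{p} ∪ Z^(p) ∪ {p⁺}`. -/
def toDm (n : ℤ) : Dm := ((n : WithTop ℤ) : Dm)

/-- The element `p⁺` of `{p} ∪ Z^(p) ∪ {p⁺}`. -/
def topDm : Dm := ((⊤ : WithTop ℤ) : Dm)

/-- The unprimed label `p ∈ [m]` with index `i`. -/
def unpr {m : ℕ} (i : Fin m) : Fin (2 * m) := ⟨2 * i.1 + 1, by have := i.2; omega⟩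

/-- The primed label `p' ∈ [m']` with index `i`. -/
def prim {m : ℕ} (i : Fin m) : Fin (2 * m) := ⟨2 * i.1, by have := i.2; omega⟩

/-- Four points of `Fin n` (viewed on a circle with its natural cyclic order) are in
(strict, anticlockwise) cyclic order. -/
def Cyc4 {n : ℕ} (a b c d : Fin n) : Prop :=
  (a < b ∧ b < c ∧ c < d) ∨ (b < c ∧ c < d ∧ d < a) ∨
  (c < d ∧ d < a ∧ a < b) ∨ (d < a ∧ a < b ∧ b < c)

/-- A partition (setoid) of `Fin n` is non-crossing if there are no elements
`i1, j1, i2, j2` in cyclic order with `i1, i2` in one block and `j1, j2` in a different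
block. -/
def IsNoncrossing {n : ℕ} (P : Setoid (Fin n)) : Prop :=
  ∀ i1 j1 i2 j2 : Fin n, Cyc4 i1 j1 i2 j2 → P.r i1 i2 → P.r j1 j2 → P.r i1 j1

/-! ### Alternating non-crossing partitions and the arc sets `U_{(P,X)}` -/

/-- A point of `Z_{2m}` belongs to the interval `[x_{p⁻}, p⁺)` attached to the primed
label `p' ∈ [m']` of index `j`: it lies in the primed copy `Z^(p)`, or in the unprimed
copy `Z^(p⁻)` above the decoration `x_{p⁻}`. -/
def altRegion {m : ℕ} (x : Fin m → Dm) (j : Fin m) (a : Pt m) : Prop :=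
  a.1 = prim j ∨ (a.1 = unpr (cycPred j) ∧ x (cycPred j) ≤ toDm a.2)

/-- The set of arcs `U_{(P,X)}` associated with an alternating non-crossing partition
`(P, X)`: arcs both of whose endpoints lie in `⋃_{p ∈ B} [x_{p⁻}, p⁺)` for a single
block `B` of `P`. -/
def altU {m : ℕ} (P : Setoid (Fin m)) (x : Fin m → Dm) : Set (Pt m × Pt m) :=
  {a | IsArc a ∧ ∃ b : Fin m,
    (∃ j, P.r b j ∧ altRegion x j a.1) ∧ (∃ j, P.r b j ∧ altRegion x j a.2)}

end PY

namespace PY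

/-- The condition on the decorations of a half-decorated non-crossing partition of
`[m'] ∪ [m]`: for an unprimed label `p` (of index `i`, with cyclic successor the primed
label `p⁺` of index `i + 1`), if `{p}` is a block of `P` then `x_p ≠ p⁺`; if `p` and `p⁺`
lie in a common block of `P` then `x_p ≠ p`; otherwise `x_p ∈ Z^(p)`. -/
def HalfDecCond {m : ℕ} (P : Setoid (Fin (2 * m))) (x : Fin m → Dm) : Prop :=
  ∀ i : Fin m,
    ((∀ r, P.r (unpr i) r → r = unpr i) → x i ≠ topDm) ∧
    (P.r (unpr i) (prim (cycSucc i)) → x i ≠ (⊥ : Dm)) ∧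
    (¬ (∀ r, P.r (unpr i) r → r = unpr i) → ¬ P.r (unpr i) (prim (cycSucc i)) →
      ∃ n : ℤ, x i = toDm n)

/-- A point of `Z_{2m}` lies in the region attached to the block of the label `b`: its
label lies in the block of `b` and, if its label is an unprimed label `p`, then it lies
in the interval `(p, x_p]`. -/
def hdRegion {m : ℕ} (P : Setoid (Fin (2 * m))) (x : Fin m → Dm) (b : Fin (2 * m))
    (a : Pt m) : Prop :=
  P.r b a.1 ∧ ∀ i : Fin m, a.1 = unpr i → toDm a.2 ≤ x i

/-- The set of arcs `U_{(P,X)}` associated with a half-decorated non-crossing partition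
`(P, X)`: arcs both of whose endpoints lie in
`(⋃_{p ∈ B ∩ [m]} (p, x_p]) ∪ (⋃_{p ∈ B ∩ [m']} Z^(p))` for a single block `B` of `P`. -/
def hdU {m : ℕ} (P : Setoid (Fin (2 * m))) (x : Fin m → Dm) : Set (Pt m × Pt m) :=
  {a | IsArc a ∧ ∃ b : Fin (2 * m), hdRegion P x b a.1 ∧ hdRegion P x b a.2}

end PY

namespace PY

/-- The shift `Σⁿ` on arcs: it subtracts `n` from both integer coordinates and keeps the
labels. -/
def shiftArc {m : ℕ} (n : ℤ) (a : Pt m × Pt m) : Pt m × Pt m :=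
  ((a.1.1, a.1.2 - n), (a.2.1, a.2.2 - n))

/-- An arc of `Z_{2m}` belongs to `D`: both endpoints lie in one primed copy. -/
def memD {m : ℕ} (a : Pt m × Pt m) : Prop :=
  a.1.1 = a.2.1 ∧ a.1.1.1 % 2 = 0

end PY

/-!
Shifting an arc moves both endpoints along their copies of `ℤ` and keeps their labels. The
region `(p, x_p]` of an unprimed copy contains all shifts of a point exactly when
`x_p = p⁺`, while a primed copy lies entirely in the region of its block. Hence the arcs
all of whose shifts lie in `U_{(P,X)}` are those whose two labels share a block of `P` and
whose unprimed endpoint labels `p` all have `x_p = p⁺`. Such an arc lies outside `D` exactly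
when it sits in one unprimed copy `Z^(p)` with `x_p = p⁺`, or joins two distinct primed
copies in one block.
-/

namespace PY

theorem isArc_shiftArc {m : ℕ} (n : ℤ) {a : Pt m × Pt m} (ha : IsArc a) :
    IsArc (shiftArc n a) := by
  obtain ⟨hlt | ⟨hlabel, hlt⟩, hgap⟩ := ha
  · exact ⟨Or.inl hlt, fun hlabel => by have := hgap hlabel; simp only [shiftArc]; omega⟩
  · exact ⟨Or.inr ⟨hlabel, by simp only [shiftArc]; omega⟩,
      fun hlabel => by have := hgap hlabel; simp only [shiftArc]; omega⟩

theorem isArc_of_lt {m : ℕ} {r s : Fin (2 * m)} (hrs : r < s) (u v : ℤ) :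
    IsArc ((r, u), (s, v)) :=
  ⟨Or.inl hrs, fun h => absurd h hrs.ne⟩

theorem unpr_val_mod_two {m : ℕ} (i : Fin m) : (unpr i).1 % 2 = 1 := by
  simp [unpr]

theorem exists_unpr_of_val_mod_two {m : ℕ} {r : Fin (2 * m)} (hr : r.1 % 2 = 1) :
    ∃ i : Fin m, r = unpr i :=
  ⟨⟨r.1 / 2, by omega⟩, Fin.ext (by simp only [unpr]; omega)⟩

theorem ne_unpr_of_val_mod_two {m : ℕ} {r : Fin (2 * m)} (hr : r.1 % 2 = 0) (i : Fin m) :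
    r ≠ unpr i := fun h => by
  have := unpr_val_mod_two i
  rw [← h] at this
  omega

theorem unpr_injective {m : ℕ} : Function.Injective (unpr (m := m)) := fun i j h => by
  have := congrArg Fin.val h
  simp only [unpr] at this
  exact Fin.ext (by omega)

theorem toDm_le_topDm (n : ℤ) : toDm n ≤ topDm :=
  WithBot.coe_le_coe.mpr le_top

theorem forall_toDm_sub_le_iff (d : Dm) (z : ℤ) :
    (∀ n : ℤ, toDm (z - n) ≤ d) ↔ d = topDm := by
  refine ⟨fun h => ?_, fun h n => h ▸ toDm_le_topDm _⟩
  match d, h with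
  | ⊥, h => exact absurd (h 0) (WithBot.not_coe_le_bot _)
  | ((⊤ : WithTop ℤ) : Dm), _ => rfl
  | ((k : ℤ) : Dm), h =>
    have hk : z - (z - k - 1) ≤ k :=
      WithTop.coe_le_coe.mp (WithBot.coe_le_coe.mp (h (z - k - 1)))
    omega

theorem val_mod_two_eq_zero_of_forall_ne_topDm {m : ℕ} {x : Fin m → Dm}
    (hx : ∀ i, x i ≠ topDm) {r : Fin (2 * m)} (hr : ∀ i, r = unpr i → x i = topDm) :
    r.1 % 2 = 0 := by
  by_contra hodd
  obtain ⟨i, hi⟩ := exists_unpr_of_val_mod_two (by omega : r.1 % 2 = 1)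
  exact hx i (hr i hi)

variable {m : ℕ} {P : Setoid (Fin (2 * m))} {x : Fin m → Dm}

theorem forall_shiftArc_mem_hdU_iff {a : Pt m × Pt m} :
    (∀ n : ℤ, shiftArc n a ∈ hdU P x) ↔
      IsArc a ∧ P.r a.1.1 a.2.1 ∧ (∀ i, a.1.1 = unpr i → x i = topDm) ∧
        ∀ i, a.2.1 = unpr i → x i = topDm := by
  constructor
  · intro h
    obtain ⟨ha, b, ⟨hb₁, -⟩, ⟨hb₂, -⟩⟩ := h 0
    simp only [shiftArc, sub_zero] at ha
    refine ⟨ha, P.trans (P.symm hb₁) hb₂, fun i hi => ?_, fun i hi => ?_⟩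
    · refine (forall_toDm_sub_le_iff _ a.1.2).mp fun n => ?_
      obtain ⟨-, -, ⟨-, hdec⟩, -⟩ := h n
      exact hdec i hi
    · refine (forall_toDm_sub_le_iff _ a.2.2).mp fun n => ?_
      obtain ⟨-, -, -, ⟨-, hdec⟩⟩ := h n
      exact hdec i hi
  · rintro ⟨ha, hblock, htop₁, htop₂⟩ n
    exact ⟨isArc_shiftArc n ha, a.1.1,
      ⟨P.refl _, fun i hi => htop₁ i hi ▸ toDm_le_topDm _⟩,
      ⟨hblock, fun i hi => htop₂ i hi ▸ toDm_le_topDm _⟩⟩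

end PY

open PY in
theorem inter_shifts_hdU_eq_D_iff_general
    (m : ℕ)
    (P : Setoid (Fin (2 * m))) (x : Fin m → Dm) :
    (∀ a : Pt m × Pt m, IsArc a →
        ((∀ n : ℤ, shiftArc n a ∈ hdU P x) ↔ memD a)) ↔
      ((∀ i : Fin m, x i ≠ topDm) ∧
        ∀ r s : Fin (2 * m), r.1 % 2 = 0 → s.1 % 2 = 0 → P.r r s → r = s) := by
  simp only [forall_shiftArc_mem_hdU_iff]
  constructor
  · intro h
    refine ⟨fun i hi => ?_, fun r s hr hs hrs => ?_⟩
    · have ha : IsArc ((unpr i, 0), (unpr i, 2)) :=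
        ⟨Or.inr ⟨rfl, by norm_num⟩, fun _ => le_rfl⟩
      have htop : ∀ j, unpr i = unpr j → x j = topDm := fun j hj => unpr_injective hj ▸ hi
      have hD : memD ((unpr i, 0), (unpr i, 2)) := (h _ ha).mp ⟨ha, P.refl _, htop, htop⟩
      exact ne_unpr_of_val_mod_two hD.2 i rfl
    · by_contra hne
      wlog hlt : r < s generalizing r s
      · exact this s r hs hr (P.symm hrs) (Ne.symm hne) ((not_lt.mp hlt).lt_of_ne (Ne.symm hne))
      exact hne ((h _ (isArc_of_lt hlt 0 0)).mp ⟨isArc_of_lt hlt 0 0, hrs,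
        fun i hi => absurd hi (ne_unpr_of_val_mod_two hr i),
        fun i hi => absurd hi (ne_unpr_of_val_mod_two hs i)⟩).1
  · rintro ⟨hxt, hprim⟩ a ha
    constructor
    · rintro ⟨-, hblock, htop₁, htop₂⟩
      have h₁ := val_mod_two_eq_zero_of_forall_ne_topDm hxt htop₁
      exact ⟨hprim _ _ h₁ (val_mod_two_eq_zero_of_forall_ne_topDm hxt htop₂) hblock, h₁⟩
    · rintro ⟨hlabel, heven⟩
      exact ⟨ha, hlabel ▸ P.refl _, fun i hi => absurd hi (ne_unpr_of_val_mod_two heven i),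
        fun i hi => absurd (hlabel.trans hi) (ne_unpr_of_val_mod_two heven i)⟩

open PY in
theorem inter_shifts_hdU_eq_D_iff
    (m : ℕ) (hm : 0 < m)
    (P : Setoid (Fin (2 * m))) (x : Fin m → Dm)
    (hP : IsNoncrossing P) (hx : HalfDecCond P x) :
    (∀ a : Pt m × Pt m, IsArc a →
        ((∀ n : ℤ, shiftArc n a ∈ hdU P x) ↔ memD a)) ↔
      ((∀ i : Fin m, x i ≠ topDm) ∧
        ∀ r s : Fin (2 * m), r.1 % 2 = 0 → s.1 % 2 = 0 → P.r r s → r = s) :=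
  inter_shifts_hdU_eq_D_iff_general m P x
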